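/- Let C = ⟨A, B, Q, q0, δ, K, col⟩ be a deterministic concurrent arena and W ⊆ K^ω. If Player A (respectively, Player B) has a winning color strategy in ⟨C, W⟩, then Player A (respectively, Player B) has a winning color strategy in the sequential game ⟨Seq(C), Seq(W)⟩. -/

import Mathlib

open MeasureTheory
open scoped Classical

universe u

/-- The cylinder set generated by a finite word. -/
def Cyl {K : Type u} (w : List K) : Set (ℕ → K) :=
  {ρ | ∀ i : ℕ, ∀ h : i < w.length, ρ i = w.get ⟨i, h⟩}

/-- The σ-algebra on `ℕ → K` generated by cylinder sets. -/
def BorelSeq (K : Type u) : MeasurableSpace (ℕ → K) :=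
  MeasurableSpace.generateFrom {s | ∃ w : List K, s = Cyl w}

/-- A game form (given by its outcome function `ρ : S_A → S_B → O`) is determined if
for every subset `V` of outcomes, either Player A can force the outcome into `V`,
or Player B can force it out of `V`. -/
def GFDetermined {SA SB O : Type u} (ρ : SA → SB → O) : Prop :=
  ∀ V : Set O, (∃ a, ∀ b, ρ a b ∈ V) ∨ (∃ b, ∀ a, ρ a b ∉ V)

/-- The color history `col(π_0,π_1) ⋯ col(π_{n-1},π_n)` of a play prefix. -/
def colorHist {Q K : Type u} (col : Q → Q → K) (π : ℕ → Q) (n : ℕ) : List K :=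
  List.ofFn (fun i : Fin n => col (π i) (π (i + 1)))

/-- The color sequence of an infinite play. -/
def colorSeq {Q K : Type u} (col : Q → Q → K) (π : ℕ → Q) : ℕ → K :=
  fun n => col (π n) (π (n + 1))

/-- `π` is a play consistent with Player A's color strategy `sA`. -/
def PlayA {A B Q K : Type u} (q0 : Q) (δ : Q → A → B → Q) (col : Q → Q → K)
    (sA : List K → Q → A) (π : ℕ → Q) : Prop :=
  π 0 = q0 ∧ ∀ n, ∃ b, π (n + 1) = δ (π n) (sA (colorHist col π n) (π n)) b

/-- `π` is a play consistent with Player B's color strategy `sB`. -/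
def PlayB {A B Q K : Type u} (q0 : Q) (δ : Q → A → B → Q) (col : Q → Q → K)
    (sB : List K → Q → B) (π : ℕ → Q) : Prop :=
  π 0 = q0 ∧ ∀ n, ∃ a, π (n + 1) = δ (π n) a (sB (colorHist col π n) (π n))

/-- Player A's color strategy `sA` is winning for objective `W`. -/
def WinA {A B Q K : Type u} (q0 : Q) (δ : Q → A → B → Q) (col : Q → Q → K)
    (W : Set (ℕ → K)) (sA : List K → Q → A) : Prop :=
  ∀ π : ℕ → Q, PlayA q0 δ col sA π → colorSeq col π ∈ W

/-- Player B's color strategy `sB` is winning for the objective complementary to `W`. -/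
def WinB {A B Q K : Type u} (q0 : Q) (δ : Q → A → B → Q) (col : Q → Q → K)
    (W : Set (ℕ → K)) (sB : List K → Q → B) : Prop :=
  ∀ π : ℕ → Q, PlayB q0 δ col sB π → colorSeq col π ∉ W

/-- Transition function of the sequential version: from a Player A vertex `q`,
action `a` moves to `(q, a)`; from a Player B vertex `(q, a)`, Player B's action `b`
moves to `δ q a b`. -/
def seqDelta {A B Q : Type u} (δ : Q → A → B → Q) :
    Q ⊕ Q × A → A → B → Q ⊕ Q × A
  | Sum.inl q, a, _ => Sum.inr (q, a)
  | Sum.inr qa, _, b => Sum.inl (δ qa.1 qa.2 b)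

/-- Coloring of the sequential version: edges `(q, a) → q'` carry `some (col q q')`,
all other edges carry the fresh color `none`. -/
def seqCol {A Q K : Type u} (col : Q → Q → K) :
    Q ⊕ Q × A → Q ⊕ Q × A → Option K
  | Sum.inr qa, Sum.inl q' => some (col qa.1 q')
  | _, _ => none

/-- The length-`n` prefix of an infinite sequence, as a finite word. -/
def prefixWord {D : Type u} (ρ : ℕ → D) (n : ℕ) : List D :=
  List.ofFn (fun i : Fin n => ρ i)

/-- A finite word is a prefix of an infinite sequence. -/
def IsPrefixOfSeq {K : Type u} (w : List K) (ρ : ℕ → K) : Prop :=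
  ∀ i : ℕ, ∀ h : i < w.length, w.get ⟨i, h⟩ = ρ i

/-- `ρ ∈ K^ω` is the projection of `ρ' ∈ (Option K)^ω`: every erased prefix of `ρ'`
is a prefix of `ρ` and the lengths of the erased prefixes tend to infinity
(equivalently, `ρ'` has infinitely many `some` entries whose values, in order,
form `ρ`). -/
def IsProjOf {K : Type u} (ρ : ℕ → K) (ρ' : ℕ → Option K) : Prop :=
  (∀ n : ℕ, IsPrefixOfSeq ((prefixWord ρ' n).reduceOption) ρ) ∧
  Filter.Tendsto (fun n => ((prefixWord ρ' n).reduceOption).length)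
    Filter.atTop Filter.atTop

/-- The sequential version `Seq(W)` of an objective `W ⊆ K^ω`: the sequences in
`(Option K)^ω` with infinitely many `some` entries whose subsequence of values
lies in `W`. -/
def SeqObj {K : Type u} (W : Set (ℕ → K)) : Set (ℕ → Option K) :=
  {ρ' | ∃ ρ ∈ W, IsProjOf ρ ρ'}


/-!
A play of `Seq(C)` from `q0` alternates between states `π n` of `C` and intermediate vertices
`(π n, α n)`, where `π` is a play of `C`. Only the edges out of intermediate vertices carry a
`some` color, so erasing the `none`s from the colors of the first `m` steps leaves exactly the
colors of the first `m / 2` steps of `π`. Hence a color strategy of `C`, run on the erased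
history, sees in `Seq(C)` the same histories as in `C`: each play consistent with the lifted
strategy traces a play of `C` consistent with the original one, whose color sequence is the
projection of the sequential color sequence.
-/

open Filter

namespace IsProjOf

variable {K : Type u} {ρ ρ₁ ρ₂ : ℕ → K} {ρ' : ℕ → Option K}

theorem unique (h₁ : IsProjOf ρ₁ ρ') (h₂ : IsProjOf ρ₂ ρ') : ρ₁ = ρ₂ := by
  funext i
  obtain ⟨n, hn⟩ := (h₁.2.eventually_gt_atTop i).exists
  exact (h₁.1 n i hn).symm.trans (h₂.1 n i hn)

theorem mem_seqObj_iff (h : IsProjOf ρ ρ') {W : Set (ℕ → K)} : ρ' ∈ SeqObj W ↔ ρ ∈ W :=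
  ⟨fun ⟨_, hW, h'⟩ => h'.unique h ▸ hW, fun hW => ⟨ρ, hW, h⟩⟩

end IsProjOf

section PrefixWord

variable {D : Type u}

theorem prefixWord_succ (ρ : ℕ → D) (n : ℕ) : prefixWord ρ (n + 1) = prefixWord ρ n ++ [ρ n] := by
  simp only [prefixWord, List.ofFn_succ_last, Fin.val_castSucc, Fin.val_last]

theorem isPrefixOfSeq_prefixWord (ρ : ℕ → D) (n : ℕ) : IsPrefixOfSeq (prefixWord ρ n) ρ := by
  intro i hi
  simp [prefixWord]

theorem isProjOf_of_reduceOption_prefixWord {ρ : ℕ → D} {ρ' : ℕ → Option D} {f : ℕ → ℕ}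
    (hf : Tendsto f atTop atTop) (h : ∀ m, (prefixWord ρ' m).reduceOption = prefixWord ρ (f m)) :
    IsProjOf ρ ρ' := by
  refine ⟨fun m => h m ▸ isPrefixOfSeq_prefixWord ρ (f m), ?_⟩
  simp only [h]
  simpa [prefixWord] using hf

end PrefixWord

section Sequential

variable {A B Q K : Type u} {q0 : Q} {δ : Q → A → B → Q} {col : Q → Q → K}

def seqState : Q ⊕ Q × A → Q :=
  Sum.elim id Prod.fst

def liftStrategy {X : Type*} (s : List K → Q → X) : List (Option K) → Q ⊕ Q × A → X :=
  fun h v => s h.reduceOption (seqState v)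

def IsSeqUnfolding (π : ℕ → Q) (α : ℕ → A) (π' : ℕ → Q ⊕ Q × A) : Prop :=
  ∀ n, π' (2 * n) = Sum.inl (π n) ∧ π' (2 * n + 1) = Sum.inr (π n, α n)

theorem exists_isSeqUnfolding {π' : ℕ → Q ⊕ Q × A} (h0 : π' 0 = Sum.inl q0)
    (hstep : ∀ n, ∃ a b, π' (n + 1) = seqDelta δ (π' n) a b) :
    ∃ π α, π 0 = q0 ∧ IsSeqUnfolding π α π' := by
  have hshape : ∀ n, ∃ q a, π' (2 * n) = Sum.inl q ∧ π' (2 * n + 1) = Sum.inr (q, a) := by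
    intro n
    induction n with
    | zero =>
      obtain ⟨a, b, h⟩ := hstep 0
      exact ⟨q0, a, h0, by rw [h, h0]; rfl⟩
    | succ n ih =>
      obtain ⟨q, a, -, hodd⟩ := ih
      obtain ⟨_, b, heven⟩ := hstep (2 * n + 1)
      obtain ⟨a', b', hnext⟩ := hstep (2 * (n + 1))
      rw [hodd] at heven
      refine ⟨δ q a b, a', heven, ?_⟩
      rw [hnext, show 2 * (n + 1) = 2 * n + 1 + 1 by ring, heven]
      rfl
  choose π α hπ using hshape
  refine ⟨π, α, ?_, hπ⟩
  simpa [h0] using (hπ 0).1.symm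

namespace IsSeqUnfolding

variable {π : ℕ → Q} {α : ℕ → A} {π' : ℕ → Q ⊕ Q × A}

theorem apply_succ_two_mul_add_one (h : IsSeqUnfolding π α π') (n : ℕ) :
    π' (2 * n + 1 + 1) = Sum.inl (π (n + 1)) :=
  (h (n + 1)).1

theorem reduceOption_prefixWord (h : IsSeqUnfolding π α π') (m : ℕ) :
    (prefixWord (colorSeq (seqCol col) π') m).reduceOption =
      prefixWord (colorSeq col π) (m / 2) := by
  induction m with
  | zero => rfl
  | succ m ih =>
    rw [prefixWord_succ, List.reduceOption_append, ih]
    obtain ⟨n, rfl | rfl⟩ := Nat.even_or_odd' m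
    · have : (2 * n + 1) / 2 = 2 * n / 2 := by omega
      simp [colorSeq, (h n).1, (h n).2, seqCol, this]
    · have h₁ : (2 * n + 1) / 2 = n := by omega
      have h₂ : (2 * n + 1 + 1) / 2 = n + 1 := by omega
      simp [colorSeq, (h n).2, h.apply_succ_two_mul_add_one, seqCol, h₁, h₂, prefixWord_succ]

theorem isProjOf (h : IsSeqUnfolding π α π') :
    IsProjOf (colorSeq col π) (colorSeq (seqCol col) π') :=
  isProjOf_of_reduceOption_prefixWord (Nat.tendsto_div_const_atTop two_ne_zero)
    h.reduceOption_prefixWord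

theorem reduceOption_colorHist_double (h : IsSeqUnfolding π α π') (n : ℕ) :
    (colorHist (seqCol col) π' (2 * n)).reduceOption = colorHist col π n := by
  refine (h.reduceOption_prefixWord (2 * n)).trans ?_
  rw [Nat.mul_div_cancel_left n two_pos]
  rfl

theorem reduceOption_colorHist_double_add_one (h : IsSeqUnfolding π α π') (n : ℕ) :
    (colorHist (seqCol col) π' (2 * n + 1)).reduceOption = colorHist col π n := by
  refine (h.reduceOption_prefixWord (2 * n + 1)).trans ?_
  rw [show (2 * n + 1) / 2 = n by omega]
  rfl

theorem playA {sA : List K → Q → A} (h : IsSeqUnfolding π α π') (h0 : π 0 = q0)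
    (hplay : PlayA (Sum.inl q0) (seqDelta δ) (seqCol col) (liftStrategy sA) π') :
    PlayA q0 δ col sA π := by
  refine ⟨h0, fun n => ?_⟩
  obtain ⟨_, hα⟩ := hplay.2 (2 * n)
  obtain ⟨b, hb⟩ := hplay.2 (2 * n + 1)
  rw [(h n).1, (h n).2] at hα
  rw [(h n).2, h.apply_succ_two_mul_add_one] at hb
  simp only [seqDelta, liftStrategy, seqState, h.reduceOption_colorHist_double, Sum.inr.injEq,
    Prod.mk.injEq] at hα hb
  exact ⟨b, by simpa [hα.2] using hb⟩

theorem playB {sB : List K → Q → B} (h : IsSeqUnfolding π α π') (h0 : π 0 = q0)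
    (hplay : PlayB (Sum.inl q0) (seqDelta δ) (seqCol col) (liftStrategy sB) π') :
    PlayB q0 δ col sB π := by
  refine ⟨h0, fun n => ⟨α n, ?_⟩⟩
  obtain ⟨_, hb⟩ := hplay.2 (2 * n + 1)
  rw [(h n).2, h.apply_succ_two_mul_add_one] at hb
  simpa [seqDelta, liftStrategy, seqState, h.reduceOption_colorHist_double_add_one] using hb

end IsSeqUnfolding

end Sequential

theorem stmt8_general {A B Q K : Type u}
    (q0 : Q) (δ : Q → A → B → Q) (col : Q → Q → K) (W : Set (ℕ → K)) :
    ((∃ sA : List K → Q → A, WinA q0 δ col W sA) →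
      ∃ σA : List (Option K) → Q ⊕ Q × A → A,
        WinA (Sum.inl q0) (seqDelta δ) (seqCol col) (SeqObj W) σA) ∧
    ((∃ sB : List K → Q → B, WinB q0 δ col W sB) →
      ∃ σB : List (Option K) → Q ⊕ Q × A → B,
        WinB (Sum.inl q0) (seqDelta δ) (seqCol col) (SeqObj W) σB) := by
  constructor
  · rintro ⟨sA, hsA⟩
    refine ⟨liftStrategy sA, fun π' hπ' => ?_⟩
    obtain ⟨π, α, h0, hπ⟩ :=
      exists_isSeqUnfolding hπ'.1 fun n => (hπ'.2 n).elim fun b hb => ⟨_, b, hb⟩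
    exact hπ.isProjOf.mem_seqObj_iff.2 (hsA π (hπ.playA h0 hπ'))
  · rintro ⟨sB, hsB⟩
    refine ⟨liftStrategy sB, fun π' hπ' => ?_⟩
    obtain ⟨π, α, h0, hπ⟩ :=
      exists_isSeqUnfolding hπ'.1 fun n => (hπ'.2 n).elim fun a ha => ⟨a, _, ha⟩
    exact hπ.isProjOf.mem_seqObj_iff.not.2 (hsB π (hπ.playB h0 hπ'))

/-- For any deterministic concurrent arena: if Player A (resp. Player B) has a
winning color strategy in `⟨C, W⟩`, then she has one in the sequential game
`⟨Seq(C), Seq(W)⟩`. -/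
theorem stmt8 {A B Q K : Type u} [Nonempty A] [Nonempty B] [Nonempty Q] [Nonempty K]
    (q0 : Q) (δ : Q → A → B → Q) (col : Q → Q → K) (W : Set (ℕ → K)) :
    ((∃ sA : List K → Q → A, WinA q0 δ col W sA) →
      ∃ σA : List (Option K) → Q ⊕ Q × A → A,
        WinA (Sum.inl q0) (seqDelta δ) (seqCol col) (SeqObj W) σA) ∧
    ((∃ sB : List K → Q → B, WinB q0 δ col W sB) →
      ∃ σB : List (Option K) → Q ⊕ Q × A → B,
        WinB (Sum.inl q0) (seqDelta δ) (seqCol col) (SeqObj W) σB) :=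
  stmt8_general q0 δ col W
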